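/- Let A, B be positive definite n×n complex matrices. If 0 < t ≤ s ≤ 1, then T_t(A|B) ≤ T_s(A|B) in the Loewner order; that is, the map s ↦ T_s(A|B) is monotonically increasing on (0, 1]. -/

import Mathlib

open Matrix ComplexOrder

/-- Real power of a (Hermitian) matrix via the continuous functional calculus. -/
noncomputable def mrpow {n : ℕ} (A : Matrix (Fin n) (Fin n) ℂ) (t : ℝ) :
    Matrix (Fin n) (Fin n) ℂ :=
  cfc (fun x : ℝ => x ^ t) A

/-- The weighted geometric mean `A ♯_t B = A^{1/2} (A^{-1/2} B A^{-1/2})^t A^{1/2}`. -/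
noncomputable def geomMean {n : ℕ} (A B : Matrix (Fin n) (Fin n) ℂ) (t : ℝ) :
    Matrix (Fin n) (Fin n) ℂ :=
  mrpow A (1 / 2) * mrpow (mrpow A (-(1 / 2)) * B * mrpow A (-(1 / 2))) t * mrpow A (1 / 2)

/-- The Tsallis relative operator entropy `T_s(A|B) = (A ♯_s B - A)/s`. -/
noncomputable def tsallis {n : ℕ} (A B : Matrix (Fin n) (Fin n) ℂ) (s : ℝ) :
    Matrix (Fin n) (Fin n) ℂ :=
  s⁻¹ • (geomMean A B s - A)

/-!
Writing `C = A^{-1/2} B A^{-1/2}`, the functional calculus gives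
`T_s(A|B) = A^{1/2} f_s(C) A^{1/2}` with `f_s(x) = (x^s - 1)/s`. Since `C ≥ 0`, it suffices that
`f_t ≤ f_s` on `[0, ∞)` for `0 < t ≤ s`; this is Bernoulli's inequality
`(x^s)^{t/s} ≤ 1 + (t/s)(x^s - 1)`. Congruence by `A^{1/2}` preserves the Loewner order.
-/

open scoped MatrixOrder

lemma inv_mul_rpow_sub_one_le_of_le {t s x : ℝ} (ht : 0 < t) (hts : t ≤ s) (hx : 0 ≤ x) :
    t⁻¹ * (x ^ t - 1) ≤ s⁻¹ * (x ^ s - 1) := by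
  have hs : 0 < s := ht.trans_le hts
  have bernoulli : x ^ t ≤ 1 + t / s * (x ^ s - 1) := by
    have h := rpow_one_add_le_one_add_mul_self (s := x ^ s - 1)
      (by linarith [Real.rpow_nonneg hx s]) (div_nonneg ht.le hs.le) ((div_le_one hs).mpr hts)
    rwa [add_sub_cancel, ← Real.rpow_mul hx, mul_div_cancel₀ _ hs.ne'] at h
  calc t⁻¹ * (x ^ t - 1) ≤ t⁻¹ * (t / s * (x ^ s - 1)) := by gcongr; linarith
    _ = s⁻¹ * (x ^ s - 1) := by field_simp

lemma Matrix.continuousOn_spectrum {n : Type*} [Fintype n] [DecidableEq n]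
    (f : ℝ → ℝ) (M : Matrix n n ℂ) : ContinuousOn f (spectrum ℝ M) :=
  Matrix.finite_real_spectrum.continuousOn f

lemma mrpow_isHermitian {n : ℕ} (M : Matrix (Fin n) (Fin n) ℂ) (r : ℝ) :
    (mrpow M r).IsHermitian :=
  cfc_predicate _ M

lemma mrpow_half_mul_self {n : ℕ} {A : Matrix (Fin n) (Fin n) ℂ} (hA : A.PosDef) :
    mrpow A (1 / 2) * mrpow A (1 / 2) = A := by
  rw [mrpow, ← cfc_mul _ _ A (continuousOn_spectrum _ A) (continuousOn_spectrum _ A)]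
  calc cfc (fun x : ℝ => x ^ (1 / 2 : ℝ) * x ^ (1 / 2 : ℝ)) A = cfc id A :=
        cfc_congr fun x hx => by
          rw [← Real.rpow_add (hA.isStrictlyPositive.spectrum_pos hx)]; norm_num
    _ = A := cfc_id ℝ A hA.1.isSelfAdjoint

lemma tsallis_eq_mrpow_mul_cfc_mul_mrpow {n : ℕ} {A B : Matrix (Fin n) (Fin n) ℂ}
    (hA : A.PosDef) (hB : B.IsHermitian) (s : ℝ) :
    tsallis A B s = mrpow A (1 / 2) *
      cfc (fun x : ℝ => s⁻¹ * (x ^ s - 1)) (mrpow A (-(1 / 2)) * B * mrpow A (-(1 / 2))) *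
      mrpow A (1 / 2) := by
  rw [tsallis, geomMean]
  set C := mrpow A (-(1 / 2)) * B * mrpow A (-(1 / 2))
  have hC : IsSelfAdjoint C := by
    simpa only [C, (mrpow_isHermitian A _).eq] using
      (isHermitian_conjTranspose_mul_mul (mrpow A (-(1 / 2))) hB).isSelfAdjoint
  have hcfc : cfc (fun x : ℝ => s⁻¹ * (x ^ s - 1)) C = s⁻¹ • (mrpow C s - 1) := by
    rw [cfc_const_mul _ _ C (continuousOn_spectrum _ C),
      cfc_sub _ _ C (continuousOn_spectrum _ C) (continuousOn_spectrum _ C),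
      cfc_const_one ℝ C hC, mrpow]
  rw [hcfc]
  simp only [mul_smul_comm, smul_mul_assoc, mul_sub, sub_mul, mul_one, mrpow_half_mul_self hA]

theorem stmt19_general (n : ℕ) (A B : Matrix (Fin n) (Fin n) ℂ) (hA : A.PosDef) (hB : B.PosDef)
    (t s : ℝ) (ht : 0 < t) (hts : t ≤ s) :
    (tsallis A B s - tsallis A B t).PosSemidef := by
  set C := mrpow A (-(1 / 2)) * B * mrpow A (-(1 / 2))
  have hC : C.PosSemidef := by
    simpa only [C, (mrpow_isHermitian A _).eq] using
      hB.posSemidef.conjTranspose_mul_mul_same (mrpow A (-(1 / 2)))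
  have hf : cfc (fun x : ℝ => t⁻¹ * (x ^ t - 1)) C ≤ cfc (fun x : ℝ => s⁻¹ * (x ^ s - 1)) C :=
    cfc_mono (fun x hx => inv_mul_rpow_sub_one_le_of_le ht hts
      (spectrum_nonneg_of_nonneg hC.nonneg hx)) (continuousOn_spectrum _ C) (continuousOn_spectrum _ C)
  rw [← Matrix.le_iff, tsallis_eq_mrpow_mul_cfc_mul_mrpow hA hB.1,
    tsallis_eq_mrpow_mul_cfc_mul_mrpow hA hB.1]
  exact (mrpow_isHermitian A _).isSelfAdjoint.conjugate_le_conjugate hf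

/-- For positive definite `A, B` and `0 < t ≤ s ≤ 1`, in the Loewner
order `T_t(A|B) ≤ T_s(A|B)`: the map `s ↦ T_s(A|B)` is monotone on `(0, 1]`. -/
theorem stmt19 (n : ℕ) (A B : Matrix (Fin n) (Fin n) ℂ) (hA : A.PosDef) (hB : B.PosDef)
    (t s : ℝ) (ht : 0 < t) (hts : t ≤ s) (hs : s ≤ 1) :
    (tsallis A B s - tsallis A B t).PosSemidef :=
  stmt19_general n A B hA hB t s ht hts
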